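/- arXiv:math/0003136 — 8 statements merged into one kernel-verified Lean document; each statement's English description precedes it below -/
import Mathlib

section
/- In the ring of integers 𝒪_K of the cubic field K there exist two distinct maximal ideals P₁ ≠ P₂ such that the ideal generated by 5 factors as 5·𝒪_K = P₁²·P₂. -/
open Polynomial NumberField

noncomputable def f : Polynomial ℚ := X ^ 3 + 7 * X - 12

/-!
Modulo 5, `f ≡ (X + 1) ^ 2 (X + 3)`, which suggests `P₁ = (5, θ + 1)` and `P₂ = (5, θ + 3)`.
The identity `(5) = P₁ ^ 2 P₂` holds in any ring where `θ` satisfies `f`, by explicit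
certificates. Taking absolute norms, `N(P₁) ^ 2 N(P₂) = 5 ^ 3`; and `P₁` is proper, since
otherwise `N(P₂) = 125` would divide `N(θ + 3) = -f(-3) = 60`. Hence both ideals have prime
norm `5`, so they are maximal, and they are distinct because together they contain `2` and `5`.
-/

lemma f_monic : f.Monic := by unfold f; monicity!

lemma f_natDegree : f.natDegree = 3 := by unfold f; compute_degree!

lemma f_irreducible : Irreducible f := by
  refine irreducible_of_degree_le_three_of_not_isRoot (by simp [f_natDegree]) fun q hq ↦ ?_
  have hq : q ^ 3 + 7 * q - 12 = 0 := by simpa [f] using hq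
  have hint : IsIntegral ℤ q := ⟨X ^ 3 + 7 * X - 12, by monicity!, by simpa using hq⟩
  obtain ⟨n, rfl⟩ := IsIntegrallyClosed.isIntegral_iff.mp hint
  have hn : n ^ 3 + 7 * n - 12 = 0 := by simp only [eq_intCast] at hq; exact_mod_cast hq
  have h1 : n ≤ 1 := by nlinarith [sq_nonneg n, sq_nonneg (n - 1), sq_nonneg (n + 1)]
  have h2 : 1 ≤ n := by nlinarith [sq_nonneg n, sq_nonneg (n - 1), sq_nonneg (n + 1)]
  obtain rfl : n = 1 := le_antisymm h1 h2
  norm_num at hn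

theorem Algebra.adjoin_singleton_add_algebraMap {R A : Type*} [CommRing R] [Ring A]
    [Algebra R A] (x : A) (a : R) :
    Algebra.adjoin R {x + algebraMap R A a} = Algebra.adjoin R {x} := by
  refine le_antisymm (Algebra.adjoin_le ?_) (Algebra.adjoin_le ?_) <;>
    rw [Set.singleton_subset_iff, SetLike.mem_coe]
  · exact add_mem (Algebra.self_mem_adjoin_singleton R x) (Subalgebra.algebraMap_mem _ a)
  · simpa using sub_mem (Algebra.self_mem_adjoin_singleton R (x + algebraMap R A a))
      (Subalgebra.algebraMap_mem _ a)

theorem Algebra.norm_add_algebraMap_of_adjoin_eq_top {F L : Type*} [Field F] [CommRing L]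
    [Algebra F L] {x : L} (hx : IsIntegral F x) (hgen : Algebra.adjoin F {x} = ⊤) (a : F) :
    Algebra.norm F (x + algebraMap F L a) =
      (-1) ^ (minpoly F x).natDegree * (minpoly F x).eval (-a) := by
  have hxa : IsIntegral F (x + algebraMap F L a) := hx.add isIntegral_algebraMap
  let pb := PowerBasis.ofAdjoinEqTop hxa (by rwa [Algebra.adjoin_singleton_add_algebraMap])
  have := Algebra.PowerBasis.norm_gen_eq_coeff_zero_minpoly pb
  simp only [pb, PowerBasis.ofAdjoinEqTop_gen, PowerBasis.ofAdjoinEqTop_dim,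
    minpoly.add_algebraMap, natDegree_comp, natDegree_X_sub_C, mul_one,
    coeff_zero_eq_eval_zero, eval_comp] at this
  simpa using this

theorem Nat.eq_prime_of_sq_mul_eq_prime_pow_three {p a b : ℕ} (hp : p.Prime) (ha : a ≠ 1)
    (h : a ^ 2 * b = p ^ 3) : a = p ∧ b = p := by
  obtain ⟨k, -, rfl⟩ := (Nat.dvd_prime_pow hp).mp (Dvd.intro (a * b) (by rw [← h]; ring))
  rcases k with _ | _ | k
  · simp at ha
  · refine ⟨pow_one p, Nat.eq_of_mul_eq_mul_left (pow_pos hp.pos 2) ?_⟩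
    simpa [← pow_succ] using h
  · have hdvd : p ^ ((k + 2) * 2) ∣ p ^ 3 := Dvd.intro b (by rw [pow_mul, h])
    have := (Nat.pow_dvd_pow_iff_le_right hp.one_lt).mp hdvd
    omega

section
variable {S : Type*} [CommRing S] [IsDedekindDomain S] [Module.Free ℤ S]

theorem Ideal.absNorm_eq_prime_of_absNorm_sq_mul {p : ℕ} (hp : p.Prime) {I J : Ideal S}
    (hI : I ≠ ⊤) (h : absNorm (I ^ 2 * J) = p ^ 3) : absNorm I = p ∧ absNorm J = p := by
  rw [map_mul, map_pow] at h
  exact Nat.eq_prime_of_sq_mul_eq_prime_pow_three hp (mt absNorm_eq_one_iff.mp hI) h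

theorem Ideal.isMaximal_of_absNorm_eq_prime {p : ℕ} (hp : p.Prime) {I : Ideal S}
    (h : absNorm I = p) : I.IsMaximal :=
  (isPrime_of_irreducible_absNorm (h ▸ hp)).isMaximal (by rintro rfl; simp [hp.ne_zero.symm] at h)

end

section
variable {R : Type*} [CommRing R] {t : R}

theorem span_five_eq_sq_mul_of_root (ht : t ^ 3 + 7 * t - 12 = 0) :
    Ideal.span {(5 : R)} = Ideal.span {5, t + 1} ^ 2 * Ideal.span {5, t + 3} := by
  rw [sq]
  apply le_antisymm
  · set P := Ideal.span {(5 : R), t + 1} * Ideal.span {5, t + 1} * Ideal.span {5, t + 3}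
    have mem : ∀ u ∈ ({5, t + 1} : Set R), ∀ v ∈ ({5, t + 1} : Set R), ∀ w ∈ ({5, t + 3} : Set R),
        u * v * w ∈ P := fun u hu v hv w hw ↦
      Ideal.mul_mem_mul (Ideal.mul_mem_mul (Ideal.subset_span hu) (Ideal.subset_span hv))
        (Ideal.subset_span hw)
    -- Modulo the relation `(t + 1) ^ 2 (t + 3) = 5 (t ^ 2 + 3)`; with
    -- `(t + 1) (t + 3) + (t ^ 2 + 3) - 2 (t + 1) ^ 2 = 4` this expands `5 = 5 (25 - 6 * 4)`.
    have key : (5 : R) = 5 * 5 * 5 - 6 * (5 * (t + 1) * (t + 3)) - 6 * ((t + 1) * (t + 1) * (t + 3))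
        + 12 * ((t + 1) * (t + 1) * 5) := by
      linear_combination 6 * ht
    rw [Ideal.span_singleton_le_iff_mem, key]
    refine add_mem (sub_mem (sub_mem ?_ (P.mul_mem_left 6 ?_)) (P.mul_mem_left 6 ?_))
      (P.mul_mem_left 12 ?_) <;> apply mem <;> simp
  · rw [Ideal.span_mul_span', Ideal.span_mul_span', Ideal.span_le]
    rintro x ⟨y, ⟨u, hu, v, hv, rfl⟩, w, hw, rfl⟩
    simp only [Set.mem_insert_iff, Set.mem_singleton_iff] at hu hv hw
    rw [SetLike.mem_coe, Ideal.mem_span_singleton]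
    rcases hu with rfl | rfl
    · exact ⟨v * w, by ring⟩
    rcases hv with rfl | rfl
    · exact ⟨(t + 1) * w, by ring⟩
    rcases hw with rfl | rfl
    · exact ⟨(t + 1) ^ 2, by ring⟩
    · exact ⟨t ^ 2 + 3, by linear_combination ht⟩

theorem span_five_add_one_ne_span_five_add_three (h : Ideal.span {(5 : R), t + 1} ≠ ⊤) :
    Ideal.span {(5 : R), t + 1} ≠ Ideal.span {5, t + 3} := by
  intro heq
  refine h ((Ideal.eq_top_iff_one _).mpr ?_)
  have h5 : (5 : R) ∈ Ideal.span {5, t + 1} := Ideal.subset_span (by simp)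
  have h2 : (2 : R) ∈ Ideal.span {5, t + 1} := by
    have h3 : t + 3 ∈ Ideal.span {(5 : R), t + 1} := heq ▸ Ideal.subset_span (by simp)
    have h1 : t + 1 ∈ Ideal.span {(5 : R), t + 1} := Ideal.subset_span (by simp)
    have := sub_mem h3 h1
    rwa [add_sub_add_left_eq_sub, show (3 : R) - 1 = 2 by norm_num] at this
  simpa [show (5 : R) - 2 * 2 = 1 by norm_num] using sub_mem h5 (Ideal.mul_mem_left _ 2 h2)

end

theorem exists_isMaximal_sq_mul_eq_span_five {S : Type*} [CommRing S] [IsDedekindDomain S]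
    [Module.Free ℤ S] [Module.Finite ℤ S] (hrank : Module.finrank ℤ S = 3) {t : S}
    (ht : t ^ 3 + 7 * t - 12 = 0) (hnorm : Algebra.norm ℤ (t + 3) = 60) :
    ∃ P₁ P₂ : Ideal S, P₁.IsMaximal ∧ P₂.IsMaximal ∧ P₁ ≠ P₂ ∧
      Ideal.span {(5 : S)} = P₁ ^ 2 * P₂ := by
  have hfac := span_five_eq_sq_mul_of_root ht
  have habs : Ideal.absNorm (Ideal.span {(5 : S), t + 1} ^ 2 * Ideal.span {5, t + 3}) = 5 ^ 3 := by
    have := Ideal.absNorm_span_natCast (S := S) 5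
    rwa [hrank, Nat.cast_ofNat, hfac] at this
  have hP₁ : Ideal.span {(5 : S), t + 1} ≠ ⊤ := by
    intro h
    have h125 : Ideal.absNorm (Ideal.span {(5 : S), t + 3}) = 125 := by simpa [h] using habs
    have := Ideal.absNorm_dvd_norm_of_mem (Ideal.subset_span (by simp) :
      t + 3 ∈ Ideal.span {(5 : S), t + 3})
    rw [h125, hnorm] at this
    norm_num at this
  obtain ⟨h₁, h₂⟩ := Ideal.absNorm_eq_prime_of_absNorm_sq_mul Nat.prime_five hP₁ habs
  exact ⟨_, _, Ideal.isMaximal_of_absNorm_eq_prime Nat.prime_five h₁,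
    Ideal.isMaximal_of_absNorm_eq_prime Nat.prime_five h₂,
    span_five_add_one_ne_span_five_add_three hP₁, hfac⟩

section
variable {K : Type*} [Field K] [Algebra ℚ K] {θ : K}

theorem minpoly_eq_f (hroot : aeval θ f = 0) : minpoly ℚ θ = f :=
  (minpoly.eq_of_irreducible_of_monic f_irreducible hroot f_monic).symm

theorem finrank_eq_three_of_aeval_f (hroot : aeval θ f = 0) (hgen : Algebra.adjoin ℚ {θ} = ⊤) :
    Module.finrank ℚ K = 3 := by
  have hθ : IsIntegral ℚ θ := ⟨f, f_monic, hroot⟩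
  rw [(PowerBasis.ofAdjoinEqTop hθ hgen).finrank, PowerBasis.ofAdjoinEqTop_dim,
    minpoly_eq_f hroot, f_natDegree]

theorem norm_add_three_eq_sixty (hroot : aeval θ f = 0) (hgen : Algebra.adjoin ℚ {θ} = ⊤) :
    Algebra.norm ℚ (θ + 3) = 60 := by
  have := Algebra.norm_add_algebraMap_of_adjoin_eq_top ⟨f, f_monic, hroot⟩ hgen 3
  rw [minpoly_eq_f hroot, f_natDegree, map_ofNat] at this
  rw [this, f]
  norm_num

theorem isIntegral_int_of_aeval_f (hroot : aeval θ f = 0) : IsIntegral ℤ θ :=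
  ⟨X ^ 3 + 7 * X - 12, by monicity!, by simpa [f, map_ofNat] using hroot⟩

end

/-- Any field `K` containing a root `θ` of `f` that generates it over `ℚ`
is (since `f` is irreducible) a copy of the cubic field `ℚ[X]/(f)`. -/
theorem stmt_5 (K : Type) [Field K] [Algebra ℚ K] (θ : K)
    (hroot : Polynomial.aeval θ f = 0) (hgen : Algebra.adjoin ℚ {θ} = ⊤) :
    ∃ P₁ P₂ : Ideal (𝓞 K), P₁.IsMaximal ∧ P₂.IsMaximal ∧ P₁ ≠ P₂ ∧
      Ideal.span {(5 : 𝓞 K)} = P₁ ^ 2 * P₂ := by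
  have : CharZero K := charZero_of_injective_algebraMap (algebraMap ℚ K).injective
  -- `NumberField K` refers to the canonical `ℚ`-algebra structure, the only one there is.
  obtain rfl : ‹Algebra ℚ K› = DivisionRing.toRatAlgebra := Subsingleton.elim _ _
  have : NumberField K :=
    { to_finiteDimensional := (PowerBasis.ofAdjoinEqTop ⟨f, f_monic, hroot⟩ hgen).finite }
  let t : 𝓞 K := ⟨θ, isIntegral_int_of_aeval_f hroot⟩
  refine exists_isMaximal_sq_mul_eq_span_five (t := t) ?_ ?_ ?_
  · rw [RingOfIntegers.rank, finrank_eq_three_of_aeval_f hroot hgen]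
  · apply RingOfIntegers.ext
    change θ ^ 3 + 7 * θ - 12 = 0
    simpa [f, map_ofNat] using hroot
  · apply Int.cast_injective (α := ℚ)
    rw [Algebra.coe_norm_int]
    exact_mod_cast norm_add_three_eq_sixty hroot hgen
end

section
/- Let α ∈ ℤ₅ be the unique 5-adic root of X³ + 7X - 12 and set u = 14α - 19. Then u ≡ -1 (mod 25) but u ≢ -1 (mod 125); consequently u is a fifth power in ℤ₅ (there exists y ∈ ℤ₅ with y⁵ = u) but u is not a 25th power in ℤ₅ (there is no y ∈ ℤ₅ with y²⁵ = u). -/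
instance : Fact (Nat.Prime 5) := ⟨by norm_num⟩

/-!
Modulo 125 the cubic has the single root 62, so u = 14α - 19 ≡ 849 (mod 125), which settles
both congruences. As 19⁵ ≡ 849 (mod 125) and the derivative 5 · 19⁴ of X⁵ - u has valuation 1,
Hensel's lemma lifts 19 to a fifth root of u. No residue modulo 125 has 25th power 849,
so u is not a 25th power.
-/

namespace PadicInt

variable {p : ℕ} [Fact p.Prime]

theorem pow_dvd_iff_toZModPow_eq_zero (n : ℕ) (x : ℤ_[p]) :
    (p : ℤ_[p]) ^ n ∣ x ↔ toZModPow n x = 0 := by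
  rw [← RingHom.mem_ker, ker_toZModPow, Ideal.mem_span_singleton]

theorem exists_pow_eq_of_pow_three_dvd {a u : ℤ_[p]} (ha : ‖a‖ = 1)
    (h : (p : ℤ_[p]) ^ 3 ∣ a ^ p - u) : ∃ y : ℤ_[p], y ^ p = u := by
  set F : Polynomial ℤ_[p] := Polynomial.X ^ p - Polynomial.C u
  have hp : (1 : ℝ) < p := mod_cast (Fact.out : p.Prime).one_lt
  have hF : ‖F.aeval a‖ ≤ (p : ℝ) ^ (-(3 : ℕ) : ℤ) := by
    simpa [F] using (norm_le_pow_iff_mem_span_pow _ 3).mpr (Ideal.mem_span_singleton.mpr h)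
  have hF' : ‖F.derivative.aeval a‖ = (p : ℝ)⁻¹ := by
    simp [F, Polynomial.derivative_X_pow, norm_p, ha]
  obtain ⟨y, hy, -⟩ := hensels_lemma (F := F) (a := a) <| by
    rw [hF']
    refine hF.trans_lt ?_
    rw [inv_pow, ← zpow_natCast, ← zpow_neg]
    exact zpow_lt_zpow_right₀ hp (by norm_num)
  exact ⟨y, by simpa [F, sub_eq_zero] using hy⟩

end PadicInt

open PadicInt

set_option maxRecDepth 10000 in
theorem toZModPow_three_eq_62_of_root {α : ℤ_[5]} (hα : α ^ 3 + 7 * α - 12 = 0) :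
    toZModPow 3 α = 62 := by
  have unique_root : ∀ b : ZMod (5 ^ 3), b ^ 3 + 7 * b - 12 = 0 → b = 62 := by decide
  exact unique_root _ (by simpa [map_ofNat] using congrArg (toZModPow 3) hα)

set_option maxRecDepth 10000 in
theorem not_exists_pow_25_eq_849 : ¬ ∃ z : ZMod (5 ^ 3), z ^ 25 = 849 := by
  decide

theorem stmt_7 (α : ℤ_[5]) (hα : α ^ 3 + 7 * α - 12 = 0) :
    (25 : ℤ_[5]) ∣ (14 * α - 19 - (-1)) ∧
    ¬ (125 : ℤ_[5]) ∣ (14 * α - 19 - (-1)) ∧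
    (∃ y : ℤ_[5], y ^ 5 = 14 * α - 19) ∧
    ¬ ∃ y : ℤ_[5], y ^ 25 = 14 * α - 19 := by
  have hu : toZModPow 3 (14 * α - 19) = 849 := by
    rw [map_sub, map_mul, toZModPow_three_eq_62_of_root hα, map_ofNat, map_ofNat]
    decide
  have h19 : ‖(19 : ℤ_[5])‖ = 1 := by
    simpa using (norm_intCast_eq_one_iff (p := 5) (z := 19)).mpr
      (by norm_num [Int.isCoprime_iff_gcd_eq_one])
  refine ⟨?_, ?_, ?_, ?_⟩
  · rw [show (25 : ℤ_[5]) = (5 : ℕ) ^ 2 by norm_num, pow_dvd_iff_toZModPow_eq_zero,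
      ← cast_toZModPow 2 3 (by norm_num), map_sub, hu, map_neg, map_one]
    decide
  · rw [show (125 : ℤ_[5]) = (5 : ℕ) ^ 3 by norm_num,
      pow_dvd_iff_toZModPow_eq_zero, map_sub, hu, map_neg, map_one]
    decide
  · refine exists_pow_eq_of_pow_three_dvd h19 ?_
    rw [pow_dvd_iff_toZModPow_eq_zero, map_sub, hu, map_pow, map_ofNat]
    decide
  · rintro ⟨y, hy⟩
    exact not_exists_pow_25_eq_849 ⟨toZModPow 3 y, by rw [← map_pow, hy, hu]⟩
end

section
/- Let u ∈ R satisfy u ≡ 1 (mod m), where m = (t) is the maximal ideal of R. Then u is a fifth power in R (there exists y ∈ R with y⁵ = u) if and only if u ≡ 1 (mod m³). -/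
/-!
Every element of `R` is congruent mod `t` to an element of `ℤ₅`, so `y⁵ ≡ y (mod t)` by Fermat.
Hence a fifth root `y` of `u ≡ 1` is itself `≡ 1`, and then `y⁵ - 1 ∈ (5(y - 1), (y - 1)⁵) ⊆ (t³)`
because `5 ∈ (t²)`.

Conversely, for `u = 1 + c t³` we look for `y = 1 + L t`. Since `2 · 5 = t²`, the equation
`y⁵ = u` becomes `L + t H(L) = 2c` for a polynomial `H`, and its solution is the fixed point of a
`t`-adic contraction. `R` is `t`-adically complete because it is a finite `ℤ₅`-module and
`(t)² = (5)`.
-/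

open Polynomial

/-- `R = ℤ₅[X]/(X² - 10)`, i.e. `ℤ₅` with a square root of `10` adjoined. -/
noncomputable abbrev R : Type := AdjoinRoot ((X : Polynomial ℤ_[5]) ^ 2 - 10)

/-- `t` is the image of `X` in `R`, a square root of `10`;
it generates the maximal ideal `m` of the local ring `R`. -/
noncomputable abbrev t : R := AdjoinRoot.root _

universe u

section AdicComplete

variable {A : Type u} [CommRing A] {I : Ideal A}

theorem IsPrecomplete.of_finite [IsNoetherianRing A] [IsPrecomplete I A]
    (M : Type u) [AddCommGroup M] [Module A M] [Module.Finite A M] : IsPrecomplete I M := by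
  rw [← AdicCompletion.of_surjective_iff]
  intro z
  obtain ⟨w, rfl⟩ := (AdicCompletion.ofTensorProduct_bijective_of_finite_of_isNoetherian I M).2 z
  induction w using TensorProduct.induction_on with
  | zero => exact ⟨0, by simp⟩
  | tmul r x =>
    obtain ⟨a, rfl⟩ := AdicCompletion.of_surjective I A r
    refine ⟨a • x, ?_⟩
    rw [AdicCompletion.ofTensorProduct_tmul, map_smul]
    exact (algebraMap_smul (AdicCompletion I A) a _).symm
  | add v w hv hw =>
    obtain ⟨x, hx⟩ := hv
    obtain ⟨y, hy⟩ := hw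
    exact ⟨x + y, by simp [hx, hy]⟩

theorem IsAdicComplete.of_finite [IsNoetherianRing A] [IsAdicComplete I A]
    (M : Type u) [AddCommGroup M] [Module A M] [Module.Finite A M] : IsAdicComplete I M where
  toIsHausdorff := .of_le_jacobson I M (IsAdicComplete.le_jacobson_bot I)
  toIsPrecomplete := .of_finite M

theorem IsAdicComplete.of_pow {M : Type*} [AddCommGroup M] [Module A M] {k : ℕ} (hk : 0 < k)
    [IsAdicComplete (I ^ k) M] : IsAdicComplete I M where
  haus' x hx := IsHausdorff.haus ‹IsAdicComplete (I ^ k) M›.toIsHausdorff x fun n ↦ by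
    rw [← pow_mul]; exact hx (k * n)
  prec' f hf := by
    obtain ⟨L, hL⟩ := IsPrecomplete.prec ‹IsAdicComplete (I ^ k) M›.toIsPrecomplete
      (f := fun n ↦ f (k * n)) fun {m n} hmn ↦ by
        rw [← pow_mul]; exact hf (Nat.mul_le_mul_left k hmn)
    refine ⟨L, fun n ↦ (hf (Nat.le_mul_of_pos_left n hk)).trans (SModEq.mono ?_ (hL n))⟩
    rw [← pow_mul]
    exact Submodule.smul_mono_left (Ideal.pow_le_pow_right (Nat.le_mul_of_pos_left n hk))

theorem exists_fixedPoint_of_sub_mem_pow_succ [IsAdicComplete I A] (F : A → A)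
    (hF : ∀ n x y, x - y ∈ I ^ n → F x - F y ∈ I ^ (n + 1)) : ∃ L, F L = L := by
  have smodEq_iff (n : ℕ) (x y : A) : x ≡ y [SMOD (I ^ n • ⊤ : Submodule A A)] ↔ x - y ∈ I ^ n := by
    rw [SModEq.sub_mem, smul_eq_mul, Ideal.mul_top]
  have hsucc (n : ℕ) : F^[n + 1] 0 - F^[n] 0 ∈ I ^ n := by
    induction n with
    | zero => simp
    | succ n ih => simpa only [Function.iterate_succ_apply'] using hF n _ _ ih
  obtain ⟨L, hL⟩ := IsPrecomplete.prec inferInstance (f := fun n ↦ F^[n] 0) <|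
    (AdicCompletion.isAdicCauchy_iff I A fun n ↦ F^[n] 0).2 fun n ↦ by
      rw [smodEq_iff, ← neg_mem_iff, neg_sub]; exact hsucc n
  refine ⟨L, (IsHausdorff.eq_iff_smodEq (I := I)).2 fun n ↦ ?_⟩
  rw [smodEq_iff]
  have h₁ : F L - F^[n + 1] 0 ∈ I ^ (n + 1) := by
    rw [Function.iterate_succ_apply']
    exact hF n _ _ (by rw [← neg_mem_iff, neg_sub, ← smodEq_iff]; exact hL n)
  have h₂ : F^[n + 1] 0 - L ∈ I ^ (n + 1) := (smodEq_iff _ _ _).1 (hL (n + 1))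
  simpa using Ideal.pow_le_pow_right n.le_succ (add_mem h₁ h₂)

theorem exists_add_mul_eval_eq [IsAdicComplete I A] {r : A} (hr : r ∈ I) (p : A[X]) (c : A) :
    ∃ L, L + r * p.eval L = c := by
  obtain ⟨L, hL⟩ := exists_fixedPoint_of_sub_mem_pow_succ (I := I) (fun L ↦ c - r * p.eval L)
    fun n x y hxy ↦ by
      obtain ⟨q, hq⟩ := sub_dvd_eval_sub y x p
      have hyx : y - x ∈ I ^ n := by rw [← neg_sub]; exact neg_mem hxy
      rw [show c - r * p.eval x - (c - r * p.eval y) = r * (p.eval y - p.eval x) by ring, hq,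
        pow_succ']
      exact Ideal.mul_mem_mul hr (Ideal.mul_mem_right q _ hyx)
  exact ⟨L, (sub_eq_iff_eq_add.1 hL).symm⟩

end AdicComplete

theorem t_sq : t ^ 2 = 10 := by
  have h := AdjoinRoot.mk_self (f := (X : ℤ_[5][X]) ^ 2 - 10)
  rwa [map_sub, map_pow, AdjoinRoot.mk_X, map_ofNat, sub_eq_zero] at h

theorem isUnit_two : IsUnit (2 : R) := by
  have : IsUnit (2 : ℤ_[5]) := by
    rw [← IsLocalRing.notMem_maximalIdeal, ← PadicInt.ker_toZMod, RingHom.mem_ker, map_ofNat]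
    decide
  simpa only [map_ofNat] using this.map (algebraMap ℤ_[5] R)

theorem span_t_sq : Ideal.span {t} ^ 2 = Ideal.span {5} := by
  rw [Ideal.span_singleton_pow, t_sq, show (10 : R) = 5 * 2 by norm_num,
    Ideal.span_singleton_mul_right_unit isUnit_two]

theorem five_mem_span_t_sq : (5 : R) ∈ Ideal.span {t} ^ 2 :=
  span_t_sq ▸ Ideal.mem_span_singleton_self 5

theorem map_maximalIdeal :
    (IsLocalRing.maximalIdeal ℤ_[5]).map (algebraMap ℤ_[5] R) = Ideal.span {t} ^ 2 := by
  rw [span_t_sq, PadicInt.maximalIdeal_eq_span_p, Ideal.map_span, Set.image_singleton,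
    map_natCast, Nat.cast_ofNat]

instance : IsAdicComplete (Ideal.span {t}) R := by
  have : Module.Finite ℤ_[5] R :=
    (monic_X_pow_sub_C (10 : ℤ_[5]) two_ne_zero).finite_adjoinRoot
  have := IsAdicComplete.of_finite (I := IsLocalRing.maximalIdeal ℤ_[5]) R
  rw [← IsAdicComplete.map_algebraMap_iff (S := R), map_maximalIdeal] at this
  exact .of_pow two_pos

theorem pow_five_sub_self_mem (y : R) : y ^ 5 - y ∈ Ideal.span {t} := by
  obtain ⟨p, rfl⟩ := AdjoinRoot.mk_surjective y
  set a := algebraMap ℤ_[5] R (p.coeff 0)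
  have hy : AdjoinRoot.mk _ p - a ∈ Ideal.span {t} := by
    obtain ⟨q, hq⟩ := X_dvd_sub_C (p := p)
    refine Ideal.mem_span_singleton'.2 ⟨AdjoinRoot.mk _ q, ?_⟩
    have h := congrArg (AdjoinRoot.mk ((X : ℤ_[5][X]) ^ 2 - 10)) hq
    rw [map_sub, map_mul, AdjoinRoot.mk_X, AdjoinRoot.mk_C] at h
    rw [mul_comm]
    exact h.symm
  have ha : a ^ 5 - a ∈ Ideal.span {t} := by
    have h : p.coeff 0 ^ 5 - p.coeff 0 ∈ IsLocalRing.maximalIdeal ℤ_[5] := by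
      rw [← PadicInt.ker_toZMod, RingHom.mem_ker, map_sub, map_pow, ZMod.pow_card, sub_self]
    have h' := Ideal.mem_map_of_mem (algebraMap ℤ_[5] R) h
    rw [map_maximalIdeal, map_sub, map_pow] at h'
    exact Ideal.pow_le_self two_ne_zero h'
  rw [← Ideal.Quotient.eq] at hy ha ⊢
  rw [map_pow, hy, ← map_pow, ha]

theorem pow_five_sub_one_mem_pow_three {y : R} (h : y ^ 5 - 1 ∈ Ideal.span {t}) :
    y ^ 5 - 1 ∈ Ideal.span {t} ^ 3 := by
  have hs : y - 1 ∈ Ideal.span {t} := by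
    simpa using sub_mem h (pow_five_sub_self_mem y)
  rw [show y ^ 5 - 1 = 5 * (y - 1) * (1 + 2 * (y - 1) + 2 * (y - 1) ^ 2 + (y - 1) ^ 3)
    + (y - 1) ^ 5 by ring]
  refine add_mem (Ideal.mul_mem_right _ _ ?_) ?_
  · rw [pow_succ (Ideal.span {t}) 2]
    exact Ideal.mul_mem_mul five_mem_span_t_sq hs
  · exact Ideal.pow_le_pow_right (by norm_num) (Ideal.pow_mem_pow hs 5)

theorem exists_pow_five_eq {u : R} (h : u - 1 ∈ Ideal.span {t} ^ 3) : ∃ y, y ^ 5 = u := by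
  obtain ⟨c, hc⟩ := Ideal.mem_span_singleton'.1 (Ideal.span_singleton_pow t 3 ▸ h)
  -- `2 ((1 + L t)⁵ - 1) = t³ (L + t H(L))` with the `H` below, once `10` is replaced by `t²`
  obtain ⟨L, hL⟩ := exists_add_mul_eval_eq (Ideal.mem_span_singleton_self t)
    (C 2 * X ^ 2 + C (2 * t) * X ^ 3 + C (t ^ 2) * X ^ 4 + C (2 * t) * X ^ 5) (2 * c)
  simp only [eval_add, eval_mul, eval_C, eval_pow, eval_X] at hL
  refine ⟨1 + L * t, isUnit_two.mul_left_cancel ?_⟩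
  linear_combination t ^ 3 * hL + 2 * hc
    - (L * t + 2 * L ^ 2 * t ^ 2 + 2 * L ^ 3 * t ^ 3 + L ^ 4 * t ^ 4) * t_sq

theorem stmt_10 (u : R) (hu : u - 1 ∈ Ideal.span {t}) :
    (∃ y : R, y ^ 5 = u) ↔ u - 1 ∈ Ideal.span {t} ^ 3 := by
  constructor
  · rintro ⟨y, rfl⟩
    exact pow_five_sub_one_mem_pow_three hu
  · exact exists_pow_five_eq
end

section
/- Let r ∈ R be any root of X³ + 7X - 12 that does not lie in the image of ℤ₅ in R. Then 14r - 19 is a unit of R and is not a fifth power in R: there is no y ∈ R with y⁵ = 14r - 19. -/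
open Polynomial

/-! The resultant of `14X - 19` and `X³ + 7X - 12` is `±1`, so `14r - 19` is a unit whenever
`r` is a root, in any commutative ring. Write `r = c + d√10` with `c, d ∈ ℤ₅`; as `r ∉ ℤ₅`,
`d ≠ 0`, and eliminating `c` from the two coordinate equations of the cubic shows that `d` is
even a `5`-adic unit. But the `√10`-coordinate of any fifth power `(a + b√10)⁵` is divisible
by `5`, while that of `14r - 19` is `14d`. -/

namespace AdjoinRoot

variable {A : Type*} [CommRing A] {g : A[X]}

theorem exists_eq_algebraMap_add_algebraMap_mul_root (hg : g.Monic) (hdeg : g.natDegree ≤ 2)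
    (z : AdjoinRoot g) : ∃ c d : A, z = algebraMap A _ c + algebraMap A _ d * root g := by
  obtain ⟨q, hq, rfl⟩ : ∃ q : A[X], q.natDegree ≤ 1 ∧ mk g q = z := by
    obtain ⟨p, rfl⟩ := mk_surjective z
    refine ⟨p %ₘ g, ?_, by rw [← modByMonicHom_mk hg, mk_leftInverse hg]⟩
    rcases eq_or_ne g 1 with rfl | hg1
    · simp
    · have := natDegree_modByMonic_lt p hg hg1
      omega
  refine ⟨q.coeff 0, q.coeff 1, ?_⟩
  conv_lhs => rw [eq_X_add_C_of_natDegree_le_one hq]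
  simp [algebraMap_eq, add_comm]

theorem algebraMap_add_algebraMap_mul_root_inj (hg : g.Monic) (hdeg : 2 ≤ g.natDegree)
    {c d c' d' : A}
    (h : algebraMap A _ c + algebraMap A _ d * root g =
      algebraMap A _ c' + algebraMap A _ d' * root g) :
    c = c' ∧ d = d' := by
  have hq : C (d - d') * X + C (c - c') = 0 := by
    by_contra hq
    refine mk_ne_zero_of_natDegree_lt hg hq
      (natDegree_linear_le.trans_lt (one_lt_two.trans_le hdeg)) ?_
    simp only [map_add, map_mul, mk_C, mk_X, ← algebraMap_eq, map_sub]
    linear_combination h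
  exact ⟨by simpa [sub_eq_zero] using congrArg (coeff · 0) hq,
    by simpa [sub_eq_zero] using congrArg (coeff · 1) hq⟩

end AdjoinRoot

theorem PadicInt.isUnit_natCast {p : ℕ} [Fact p.Prime] {n : ℕ} (hn : ¬p ∣ n) :
    IsUnit (n : ℤ_[p]) := by
  rw [PadicInt.isUnit_iff]
  refine le_antisymm (PadicInt.norm_le_one _) (not_lt.mp fun h => hn ?_)
  exact_mod_cast (PadicInt.norm_int_lt_one_iff_dvd (n : ℤ)).mp (by exact_mod_cast h)

theorem isUnit_fourteen_mul_sub_nineteen {A : Type*} [CommRing A] {r : A}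
    (hr : r ^ 3 + 7 * r - 12 = 0) : IsUnit (14 * r - 19) :=
  IsUnit.of_mul_eq_one (196 * r ^ 2 + 266 * r + 1733) (by linear_combination 2744 * hr)

namespace R

local notation "τ" => AdjoinRoot.root ((X : ℤ_[5][X]) ^ 2 - 10)
local notation "ι" => algebraMap ℤ_[5] R

theorem monic_X_sq_sub_ten : ((X : ℤ_[5][X]) ^ 2 - 10).Monic := by monicity!

theorem natDegree_X_sq_sub_ten : ((X : ℤ_[5][X]) ^ 2 - 10).natDegree = 2 := by compute_degree!

theorem root_sq : τ ^ 2 = 10 := by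
  have h := AdjoinRoot.eval₂_root ((X : ℤ_[5][X]) ^ 2 - 10)
  rwa [eval₂_sub, eval₂_X_pow, eval₂_ofNat, sub_eq_zero] at h

theorem exists_eq_coords (z : R) : ∃ c d : ℤ_[5], z = ι c + ι d * τ :=
  AdjoinRoot.exists_eq_algebraMap_add_algebraMap_mul_root monic_X_sq_sub_ten
    natDegree_X_sq_sub_ten.le z

theorem coords_inj {c d c' d' : ℤ_[5]} (h : ι c + ι d * τ = ι c' + ι d' * τ) :
    c = c' ∧ d = d' :=
  AdjoinRoot.algebraMap_add_algebraMap_mul_root_inj monic_X_sq_sub_ten natDegree_X_sq_sub_ten.ge h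

theorem isUnit_of_isRoot {c d : ℤ_[5]}
    (hroot : (ι c + ι d * τ) ^ 3 + 7 * (ι c + ι d * τ) - 12 = 0) (hd : d ≠ 0) : IsUnit d := by
  obtain ⟨hcubic, hd_quad⟩ : c ^ 3 + 30 * c * d ^ 2 + 7 * c - 12 = 0 ∧
      d * (3 * c ^ 2 + 10 * d ^ 2 + 7) = 0 := by
    refine coords_inj ?_
    simp only [map_add, map_sub, map_mul, map_pow, map_ofNat, map_zero]
    linear_combination hroot - (3 * ι c * ι d ^ 2 + ι d ^ 3 * τ) * root_sq
  have hquad := (mul_eq_zero.mp hd_quad).resolve_left hd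
  -- eliminating `c` from `hcubic` and `hquad` leaves `5260` plus a multiple of `10 * d ^ 2`
  have h526 : d * (d * (196 - 1728 * c + 1920 * c ^ 2 * d ^ 2)) = -526 := by
    have : (10 : ℤ_[5]) * (526 + d * (d * (196 - 1728 * c + 1920 * c ^ 2 * d ^ 2))) = 0 := by
      linear_combination (196 + 3 * c * (14 * c + 36 - 80 * c * d ^ 2)) * hquad
        - 9 * (14 * c + 36 - 80 * c * d ^ 2) * hcubic
    linear_combination (mul_eq_zero.mp this).resolve_left (by norm_num)
  refine isUnit_of_mul_isUnit_left (h526 ▸ (IsUnit.neg ?_))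
  exact_mod_cast PadicInt.isUnit_natCast (p := 5) (n := 526) (by norm_num)

theorem exists_pow_five_eq (y : R) : ∃ a w : ℤ_[5], y ^ 5 = ι a + ι (5 * w) * τ := by
  obtain ⟨a, b, rfl⟩ := exists_eq_coords y
  refine ⟨a ^ 5 + 100 * a ^ 3 * b ^ 2 + 500 * a * b ^ 4,
    a ^ 4 * b + 20 * a ^ 2 * b ^ 3 + 20 * b ^ 5, ?_⟩
  simp only [map_add, map_mul, map_pow, map_ofNat]
  linear_combination (10 * ι a ^ 3 * ι b ^ 2 + 10 * ι a ^ 2 * ι b ^ 3 * τ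
    + 5 * ι a * ι b ^ 4 * (τ ^ 2 + 10) + ι b ^ 5 * τ * (τ ^ 2 + 10)) * root_sq

theorem not_exists_pow_five_eq {c d : ℤ_[5]} (hd : IsUnit d) :
    ¬∃ y : R, y ^ 5 = 14 * (ι c + ι d * τ) - 19 := by
  rintro ⟨y, hy⟩
  obtain ⟨a, w, hy5⟩ := exists_pow_five_eq y
  obtain ⟨-, h5w⟩ : a = 14 * c - 19 ∧ 5 * w = 14 * d := by
    refine coords_inj ?_
    rw [← hy5, hy]
    simp only [map_sub, map_mul, map_ofNat]
    ring
  have h14 : IsUnit (14 : ℤ_[5]) := by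
    exact_mod_cast PadicInt.isUnit_natCast (p := 5) (n := 14) (by norm_num)
  have h5 : IsUnit (5 : ℤ_[5]) := isUnit_of_mul_isUnit_left (h5w ▸ h14.mul hd)
  exact PadicInt.p_nonunit (p := 5) (by exact_mod_cast h5)

end R

theorem stmt_12 (r : R) (hroot : r ^ 3 + 7 * r - 12 = 0)
    (hr : r ∉ Set.range (algebraMap ℤ_[5] R)) :
    IsUnit (14 * r - 19) ∧ ¬ ∃ y : R, y ^ 5 = 14 * r - 19 := by
  refine ⟨isUnit_fourteen_mul_sub_nineteen hroot, ?_⟩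
  obtain ⟨c, d, rfl⟩ := R.exists_eq_coords r
  have hd : d ≠ 0 := by
    rintro rfl
    exact hr ⟨c, by simp⟩
  exact R.not_exists_pow_five_eq (R.isUnit_of_isRoot hroot hd)
end

section
/- Let R be a commutative local Artinian ring in which 6 is invertible, let k = R/m be its residue field, and let n ≥ 1. If ρ₁, ρ₂ : S₃ → GLₙ(R) are group homomorphisms from the symmetric group S₃ such that the compositions of ρ₁ and ρ₂ with the reduction map GLₙ(R) → GLₙ(k) are conjugate by an element of GLₙ(k), then ρ₁ and ρ₂ are conjugate by an element of GLₙ(R). -/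
open Matrix IsLocalRing

noncomputable def red (R : Type) [CommRing R] [IsLocalRing R] (n : ℕ) :
    GL (Fin n) R →* GL (Fin n) (IsLocalRing.ResidueField R) :=
  Units.map ((IsLocalRing.residue R).mapMatrix).toMonoidHom

-- key lemma: equal reduction ⇒ conjugate
lemma key (R : Type) [CommRing R] [IsLocalRing R] (h6 : IsUnit (6 : R)) (n : ℕ)
    (ρ₁ ρ₂ : Equiv.Perm (Fin 3) →* GL (Fin n) R)
    (hred : ∀ s, red R n (ρ₁ s) = red R n (ρ₂ s)) :
    ∃ h : GL (Fin n) R, ∀ s, ρ₁ s = h * ρ₂ s * h⁻¹ := by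
  classical
  set π := IsLocalRing.residue R
  set P := π.mapMatrix (m := Fin n)
  set H : Matrix (Fin n) (Fin n) R :=
    ∑ s : Equiv.Perm (Fin 3), ((ρ₁ s : Matrix (Fin n) (Fin n) R)) * (((ρ₂ s)⁻¹ : GL (Fin n) R) : Matrix (Fin n) (Fin n) R) with hH
  have hcomm : ∀ t, ((ρ₁ t : Matrix (Fin n) (Fin n) R)) * H = H * (ρ₂ t : Matrix (Fin n) (Fin n) R) := by
    intro t
    have e1 : ((ρ₁ t : Matrix (Fin n) (Fin n) R)) * H
        = ∑ s : Equiv.Perm (Fin 3),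
            ((ρ₁ (t * s) : Matrix (Fin n) (Fin n) R)) * ((ρ₂ ((t * s)⁻¹ * t) : Matrix (Fin n) (Fin n) R)) := by
      rw [hH, Finset.mul_sum]
      refine Finset.sum_congr rfl fun s _ => ?_
      have hs : (t * s)⁻¹ * t = s⁻¹ := by group
      rw [hs, _root_.map_mul, map_inv, Units.val_mul, mul_assoc]
    have e2 : H * (ρ₂ t : Matrix (Fin n) (Fin n) R)
        = ∑ s : Equiv.Perm (Fin 3),
            ((ρ₁ s : Matrix (Fin n) (Fin n) R)) * ((ρ₂ (s⁻¹ * t) : Matrix (Fin n) (Fin n) R)) := by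
      rw [hH, Finset.sum_mul]
      refine Finset.sum_congr rfl fun s _ => ?_
      rw [_root_.map_mul, map_inv, Units.val_mul, mul_assoc]
    rw [e1, e2]
    exact Equiv.sum_comp (Equiv.mulLeft t)
      (fun s => ((ρ₁ s : Matrix (Fin n) (Fin n) R)) * ((ρ₂ (s⁻¹ * t) : Matrix (Fin n) (Fin n) R)))
  have hPH : P H = (6 : ℕ) • (1 : Matrix (Fin n) (Fin n) (ResidueField R)) := by
    rw [hH, map_sum]
    have : ∀ s : Equiv.Perm (Fin 3),
        P (((ρ₁ s : Matrix (Fin n) (Fin n) R)) * (((ρ₂ s)⁻¹ : GL (Fin n) R) : Matrix (Fin n) (Fin n) R))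
        = 1 := by
      intro s
      rw [_root_.map_mul]
      have h1 : P ((ρ₁ s : Matrix (Fin n) (Fin n) R)) = ((red R n (ρ₁ s) : Matrix (Fin n) (Fin n) (ResidueField R))) := rfl
      have h2 : P (((ρ₂ s)⁻¹ : GL (Fin n) R) : Matrix (Fin n) (Fin n) R)
          = (((red R n (ρ₂ s))⁻¹ : GL (Fin n) (ResidueField R)) : Matrix (Fin n) (Fin n) (ResidueField R)) := rfl
      rw [h1, h2, hred s, ← Units.val_mul, mul_inv_cancel, Units.val_one]
    rw [Finset.sum_congr rfl fun s _ => this s, Finset.sum_const]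
    norm_num [Fintype.card_perm, Nat.factorial]
  have hdet : IsUnit H := by
    rw [Matrix.isUnit_iff_isUnit_det]
    have h6k : IsUnit (6 : ResidueField R) := by
      have := h6.map π
      rwa [map_ofNat] at this
    have : IsUnit (π H.det) := by
      rw [RingHom.map_det]
      show IsUnit (P H).det
      rw [hPH]
      have : (6 : ℕ) • (1 : Matrix (Fin n) (Fin n) (ResidueField R)) = (6 : ResidueField R) • 1 := by
        rw [← Nat.cast_smul_eq_nsmul (ResidueField R)]
        norm_num
      rw [this, Matrix.det_smul, Matrix.det_one, mul_one]
      simpa using h6k.pow n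
    exact isUnit_of_map_unit π _ this
  refine ⟨hdet.unit, fun s => ?_⟩
  have hmul : ρ₁ s * hdet.unit = hdet.unit * ρ₂ s := by
    apply Units.ext
    rw [Units.val_mul, Units.val_mul, hdet.unit_spec]
    exact hcomm s
  rw [← hmul]
  group

theorem stmt_16 (R : Type) [CommRing R] [IsLocalRing R] [IsArtinianRing R]
    (h6 : IsUnit (6 : R)) (n : ℕ) (hn : 1 ≤ n)
    (ρ₁ ρ₂ : Equiv.Perm (Fin 3) →* GL (Fin n) R)
    (hconj : ∃ g : GL (Fin n) (IsLocalRing.ResidueField R),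
      ∀ s : Equiv.Perm (Fin 3), red R n (ρ₁ s) = g * red R n (ρ₂ s) * g⁻¹) :
    ∃ h : GL (Fin n) R, ∀ s : Equiv.Perm (Fin 3), ρ₁ s = h * ρ₂ s * h⁻¹ := by
  classical
  obtain ⟨g, hg⟩ := hconj
  set π := IsLocalRing.residue R
  let Gmat : Matrix (Fin n) (Fin n) R :=
    fun i j => (residue_surjective (R := R) ((g : Matrix (Fin n) (Fin n) (ResidueField R)) i j)).choose
  have hGmap : π.mapMatrix Gmat = (g : Matrix (Fin n) (Fin n) (ResidueField R)) := by
    ext i j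
    exact (residue_surjective (R := R) ((g : Matrix (Fin n) (Fin n) (ResidueField R)) i j)).choose_spec
  have hGunit : IsUnit Gmat := by
    rw [Matrix.isUnit_iff_isUnit_det]
    have : IsUnit (π Gmat.det) := by
      rw [RingHom.map_det]
      show IsUnit (π.mapMatrix Gmat).det
      rw [hGmap]
      exact (Matrix.isUnit_iff_isUnit_det _).mp g.isUnit
    exact isUnit_of_map_unit π _ this
  set gg : GL (Fin n) R := hGunit.unit with hggdef
  have hgg : red R n gg = g := by
    apply Units.ext
    show π.mapMatrix (gg : Matrix (Fin n) (Fin n) R) = _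
    rw [hggdef, hGunit.unit_spec, hGmap]
  set ρ₂' : Equiv.Perm (Fin 3) →* GL (Fin n) R := (MulAut.conj gg).toMonoidHom.comp ρ₂ with hρ₂'
  have hred : ∀ s, red R n (ρ₁ s) = red R n (ρ₂' s) := by
    intro s
    rw [hρ₂']
    simp only [MonoidHom.comp_apply, MulEquiv.coe_toMonoidHom, MulAut.conj_apply]
    rw [_root_.map_mul, _root_.map_mul, map_inv, hgg]
    exact hg s
  obtain ⟨h, hh⟩ := key R h6 n ρ₁ ρ₂' hred
  refine ⟨h * gg, fun s => ?_⟩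
  rw [hh s, hρ₂']
  simp only [MonoidHom.comp_apply, MulEquiv.coe_toMonoidHom, MulAut.conj_apply]
  group
end

section
/- Let a be an integer such that 27 + 4a³ is positive and prime. Then the polynomial X³ + aX + 1 is irreducible over ℚ, it has exactly one real root, and its Galois group over ℚ is isomorphic to the symmetric group S₃. -/
/-!
By the rational root test the only candidate roots are `±1`, which are roots exactly when
`a = -2` or `a = 0`; positivity of `27 + 4a³` excludes the first and primality of `27` the
second, so the cubic is irreducible. Its discriminant `-(27 + 4a³)` is negative, so it has one
real root and a pair of complex conjugate ones; complex conjugation then acts as a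
transposition on the three roots, and a transitive subgroup of `S₃` containing a transposition
is all of `S₃`.
-/

open Polynomial

theorem irreducible_X_pow_three_add_C_mul_X_add_one {a : ℤ} (h₀ : a ≠ 0) (h₂ : a ≠ -2) :
    Irreducible ((X : ℚ[X]) ^ 3 + C (a : ℚ) * X + 1) := by
  have hdeg : ((X : ℚ[X]) ^ 3 + C (a : ℚ) * X + 1).natDegree = 3 := by compute_degree!
  rw [irreducible_iff_roots_eq_zero_of_degree_le_three (by omega) (by omega)]
  refine Multiset.eq_zero_of_forall_notMem fun r hr => ?_
  have hr : aeval r ((X : ℤ[X]) ^ 3 + C a * X + 1) = 0 := by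
    simpa using (mem_roots (ne_zero_of_natDegree_gt (n := 0) (by omega))).1 hr
  obtain ⟨m, rfl, hm⟩ := exists_integer_of_is_root_of_monic (by monicity!) hr
  have hm : m = 1 ∨ m = -1 := Int.isUnit_iff.1 (isUnit_of_dvd_one (by simpa using hm))
  have hroot : m ^ 3 + a * m + 1 = 0 := by
    exact_mod_cast (by simpa using hr : (m : ℚ) ^ 3 + a * m + 1 = 0)
  rcases hm with rfl | rfl
  · exact h₂ (by linarith)
  · exact h₀ (by linarith)

theorem exists_cubic_root (p q : ℝ) : ∃ x : ℝ, x ^ 3 + p * x + q = 0 := by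
  set M := |p| + |q| + 1
  have hM : 1 ≤ M := by simp only [M]; linarith [abs_nonneg p, abs_nonneg q]
  have hbound : |p| * M + |q| < M ^ 3 := by
    have : M ≤ M ^ 2 := by nlinarith
    nlinarith [abs_nonneg p, abs_nonneg q]
  have hpM : |p * M| = |p| * M := by rw [abs_mul, abs_of_pos (show (0 : ℝ) < M by linarith)]
  have hcont : ContinuousOn (fun x : ℝ => x ^ 3 + p * x + q) (Set.Icc (-M) M) := by fun_prop
  refine (intermediate_value_Icc (by linarith) hcont ⟨?_, ?_⟩).imp fun _ hx => hx.2
  · nlinarith [neg_abs_le (p * M), le_abs_self q]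
  · nlinarith [neg_abs_le (p * M), neg_abs_le q]

/-- Two distinct roots `x, y` force the third to be `-(x + y)`, and the discriminant
`-(4p³ + 27q²)` is then the square of the Vandermonde product. -/
theorem cubic_root_unique {p q x y : ℝ} (hdisc : 0 < 4 * p ^ 3 + 27 * q ^ 2)
    (hx : x ^ 3 + p * x + q = 0) (hy : y ^ 3 + p * y + q = 0) : x = y := by
  by_contra hxy
  have hp : p = -(x ^ 2 + x * y + y ^ 2) := by
    have : (x - y) * (x ^ 2 + x * y + y ^ 2 + p) = 0 := by linear_combination hx - hy
    linarith [(mul_eq_zero.1 this).resolve_left (sub_ne_zero.2 hxy)]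
  have hq : q = x * y * (x + y) := by rw [hp] at hx; linear_combination hx
  have hdisc_eq : 4 * p ^ 3 + 27 * q ^ 2 = -((x - y) * (x + 2 * y) * (2 * x + y)) ^ 2 := by
    rw [hp, hq]; ring
  nlinarith [sq_nonneg ((x - y) * (x + 2 * y) * (2 * x + y))]

theorem existsUnique_cubic_root {p q : ℝ} (hdisc : 0 < 4 * p ^ 3 + 27 * q ^ 2) :
    ∃! x : ℝ, x ^ 3 + p * x + q = 0 :=
  let ⟨x, hx⟩ := exists_cubic_root p q
  ⟨x, hx, fun _ hy => cubic_root_unique hdisc hy hx⟩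

theorem card_rootSet_real_eq_one {p : ℚ[X]} (hp : p ≠ 0) (h : ∃! x : ℝ, aeval x p = 0) :
    Fintype.card (p.rootSet ℝ) = 1 := by
  obtain ⟨x, hx, huniq⟩ := h
  exact Fintype.card_eq_one_iff.2
    ⟨⟨x, mem_rootSet.2 ⟨hp, hx⟩⟩, fun y => Subtype.ext (huniq y (mem_rootSet.1 y.2).2)⟩

theorem Polynomial.Gal.nonempty_mulEquiv_perm_of_prime_degree {p : ℚ[X]} {n : ℕ}
    (hirr : Irreducible p) (hdeg : p.natDegree = n) (hn : n.Prime)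
    (hreal : Fintype.card (p.rootSet ℝ) + 2 = n) : Nonempty (p.Gal ≃* Equiv.Perm (Fin n)) := by
  have hcard : Fintype.card (p.rootSet ℂ) = n := by
    rw [← hdeg, card_rootSet_eq_natDegree hirr.separable (IsAlgClosed.splits _)]
  have hbij := galActionHom_bijective_of_prime_degree hirr (hdeg ▸ hn) (by omega)
  exact ⟨(MulEquiv.ofBijective _ hbij).trans (Fintype.equivFinOfCardEq hcard).permCongrHom⟩

theorem stmt_17 (a : ℤ) (hpos : 0 < 27 + 4 * a ^ 3)
    (hprime : Prime (27 + 4 * a ^ 3)) :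
    Irreducible ((X : Polynomial ℚ) ^ 3 + C (a : ℚ) * X + 1) ∧
    (∃! x : ℝ, Polynomial.aeval x ((X : Polynomial ℚ) ^ 3 + C (a : ℚ) * X + 1) = 0) ∧
    Nonempty (((X : Polynomial ℚ) ^ 3 + C (a : ℚ) * X + 1).Gal ≃* Equiv.Perm (Fin 3)) := by
  have h₀ : a ≠ 0 := by rintro rfl; norm_num at hprime
  have h₂ : a ≠ -2 := by rintro rfl; norm_num at hpos
  have hirr := irreducible_X_pow_three_add_C_mul_X_add_one h₀ h₂
  have hreal : ∃! x : ℝ, aeval x ((X : ℚ[X]) ^ 3 + C (a : ℚ) * X + 1) = 0 := by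
    have hdisc : (0 : ℝ) < 4 * (a : ℝ) ^ 3 + 27 * 1 ^ 2 := by
      have : (0 : ℝ) < 27 + 4 * (a : ℝ) ^ 3 := by exact_mod_cast hpos
      linarith
    simpa using existsUnique_cubic_root hdisc
  have hdeg : ((X : ℚ[X]) ^ 3 + C (a : ℚ) * X + 1).natDegree = 3 := by compute_degree!
  refine ⟨hirr, hreal, Gal.nonempty_mulEquiv_perm_of_prime_degree hirr hdeg Nat.prime_three ?_⟩
  rw [card_rootSet_real_eq_one hirr.ne_zero hreal]
end

section
/- The polynomial g = X³ - 29X² + 4X - 1 is irreducible over ℚ and has a non-real complex root; moreover, in the ring of integers 𝒪_K of its root field K = ℚ[X]/(g) there exist two distinct maximal ideals P₁ ≠ P₂ such that the ideal generated by 5 factors as 5·𝒪_K = P₁²·P₂. -/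
open Polynomial NumberField

noncomputable def g : Polynomial ℚ := X ^ 3 - 29 * X ^ 2 + 4 * X - 1

/-!
A rational root of `g` would be an integer dividing `1`, so the cubic `g` is irreducible. A real
root of `g` is at least `28`, while the three complex roots sum to `29`, so not all are real.

Put `P₁ = (5, θ + 1)` and `P₂ = (5, θ - 1)`. In any ring where `g(θ) = 0` one has
`(θ + 1)² (θ - 1) = 5 θ (6 θ - 1)`, which gives `(5) = P₁² P₂` by a direct computation. Taking
norms, `N(P₁)² N(P₂) = N(5) = 125` while `N(P₂)` divides `N(θ - 1) = -g(1) = 25`; hence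
`N(P₁) = N(P₂) = 5`, so both are maximal, and they differ because `P₁ + P₂ ∋ 5 - 2 · 2 = 1`.
-/

open Module IntermediateField

noncomputable def gInt : ℤ[X] := X ^ 3 - 29 * X ^ 2 + 4 * X - 1

lemma gInt_monic : gInt.Monic := by unfold gInt; monicity!

lemma aeval_gInt {A : Type*} [CommRing A] (x : A) :
    aeval x gInt = x ^ 3 - 29 * x ^ 2 + 4 * x - 1 := by
  simp only [gInt, map_sub, map_add, map_mul, map_pow, aeval_X, map_ofNat, map_one]

lemma aeval_g {A : Type*} [CommRing A] [Algebra ℚ A] (x : A) :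
    aeval x g = x ^ 3 - 29 * x ^ 2 + 4 * x - 1 := by
  simp only [g, map_sub, map_add, map_mul, map_pow, aeval_X, map_ofNat, map_one]

lemma g_monic : g.Monic := by unfold g; monicity!

lemma g_natDegree : g.natDegree = 3 := by unfold g; compute_degree!

lemma g_irreducible : Irreducible g := by
  rw [irreducible_iff_roots_eq_zero_of_degree_le_three (by rw [g_natDegree]; norm_num)
    (by rw [g_natDegree])]
  refine Multiset.eq_zero_of_forall_notMem fun q hq ↦ ?_
  have hq : aeval q gInt = 0 := by
    rw [aeval_gInt, ← aeval_g]
    exact (mem_roots g_monic.ne_zero).1 hq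
  obtain ⟨n, rfl⟩ := isInteger_of_is_root_of_monic gInt_monic hq
  rw [aeval_algebraMap_apply, map_eq_zero_iff _ (algebraMap ℤ ℚ).injective_int, aeval_gInt] at hq
  have hunit : n * (n ^ 2 - 29 * n + 4) = 1 := by linear_combination hq
  rcases Int.eq_one_or_neg_one_of_mul_eq_one hunit with rfl | rfl <;> norm_num at hunit

lemma le_of_aeval_g_eq_zero {x : ℝ} (hx : aeval x g = 0) : 28 ≤ x := by
  rw [aeval_g] at hx
  by_contra! h
  nlinarith [sq_nonneg x, sq_nonneg (x - 2), mul_nonneg (sq_nonneg x) (sub_pos.2 h).le]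

lemma exists_aeval_g_eq_zero_im_ne_zero : ∃ z : ℂ, aeval z g = 0 ∧ z.im ≠ 0 := by
  by_contra! hreal
  set gC := g.map (algebraMap ℚ ℂ)
  have hmonic : gC.Monic := g_monic.map _
  have hsplit : gC.Splits := IsAlgClosed.splits gC
  have hcard : gC.roots.card = 3 := by
    rw [splits_iff_card_roots.1 hsplit, natDegree_map, g_natDegree]
  have hsum : gC.roots.sum = 29 := by
    have hnext : g.nextCoeff = -29 := by
      rw [nextCoeff_of_natDegree_pos (by rw [g_natDegree]; norm_num), g_natDegree]
      simp [g, coeff_X, coeff_one]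
    rw [← neg_neg gC.roots.sum, ← hsplit.nextCoeff_eq_neg_sum_roots_of_monic hmonic,
      nextCoeff_map (algebraMap ℚ ℂ).injective, hnext]
    simp
  have hre : ∀ z ∈ gC.roots, 28 ≤ z.re := by
    intro z hz
    have hz : aeval z g = 0 := by rwa [mem_roots hmonic.ne_zero, IsRoot, eval_map_algebraMap] at hz
    have hz_real : z = algebraMap ℝ ℂ z.re := Complex.ext rfl (by simp [hreal z hz])
    rw [hz_real, aeval_algebraMap_apply, map_eq_zero_iff _ (algebraMap ℝ ℂ).injective] at hz
    exact le_of_aeval_g_eq_zero hz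
  have hsum_re : (gC.roots.map Complex.re).sum = 29 := by
    calc _ = Complex.reAddGroupHom gC.roots.sum := (map_multiset_sum _ _).symm
      _ = 29 := by rw [hsum]; rfl
  have hle := Multiset.card_nsmul_le_sum (s := gC.roots.map Complex.re) (a := 28) fun x hx ↦ by
    obtain ⟨z, hz, rfl⟩ := Multiset.mem_map.1 hx
    exact hre z hz
  rw [Multiset.card_map, hcard, hsum_re] at hle
  norm_num at hle

theorem Algebra.norm_eq_neg_one_pow_mul_coeff_zero_minpoly {F L : Type*} [Field F] [Field L]
    [Algebra F L] [FiniteDimensional F L] {x : L}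
    (h : (minpoly F x).natDegree = finrank F L) :
    Algebra.norm F x = (-1) ^ finrank F L * (minpoly F x).coeff 0 := by
  have hx : IsIntegral F x := .of_finite F x
  have hrank : finrank F⟮x⟯ L = 1 := by
    have := finrank_mul_finrank F F⟮x⟯ L
    rw [IntermediateField.adjoin.finrank hx, h] at this
    exact (Nat.mul_eq_left finrank_pos.ne').mp this
  rw [norm_eq_norm_adjoin, hrank, pow_one, ← IntermediateField.adjoin.powerBasis_gen hx,
    PowerBasis.norm_gen_eq_coeff_zero_minpoly, IntermediateField.adjoin.powerBasis_gen hx,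
    IntermediateField.minpoly_gen, IntermediateField.adjoin.powerBasis_dim, h]

theorem Algebra.norm_sub_algebraMap_eq_eval_minpoly {F L : Type*} [Field F] [Field L]
    [Algebra F L] [FiniteDimensional F L] {x : L}
    (h : (minpoly F x).natDegree = finrank F L) (a : F) :
    Algebra.norm F (x - algebraMap F L a) = (-1) ^ finrank F L * (minpoly F x).eval a := by
  have h' : (minpoly F (x - algebraMap F L a)).natDegree = finrank F L := by
    rw [minpoly.sub_algebraMap, natDegree_comp, natDegree_X_add_C, mul_one, h]
  rw [Algebra.norm_eq_neg_one_pow_mul_coeff_zero_minpoly h', minpoly.sub_algebraMap,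
    coeff_zero_eq_eval_zero, eval_comp]
  simp

theorem Ideal.isMaximal_of_absNorm_prime {S : Type*} [CommRing S] [IsDedekindDomain S]
    [Module.Free ℤ S] {P : Ideal S} (hP : (absNorm P).Prime) : P.IsMaximal :=
  (isPrime_of_irreducible_absNorm hP).isMaximal fun h ↦
    Nat.not_prime_zero (by rwa [h, absNorm_bot] at hP)

lemma eq_five_of_sq_mul_eq_125 {a b : ℕ} (h : a ^ 2 * b = 125) (hb : b ∣ 25) : a = 5 ∧ b = 5 := by
  obtain ⟨i, hi, rfl⟩ := (Nat.dvd_prime_pow (m := 2) Nat.prime_five).1 hb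
  have ha : a ≤ 11 := by nlinarith [Nat.one_le_pow i 5 (by norm_num)]
  interval_cases i <;> interval_cases a <;> simp_all

namespace Ideal

variable {R : Type*} [CommRing R] {θ : R}

theorem span_five_eq_sq_mul (hθ : θ ^ 3 - 29 * θ ^ 2 + 4 * θ - 1 = 0) :
    span {(5 : R)} = span {5, θ + 1} ^ 2 * span {5, θ - 1} := by
  refine le_antisymm ?_ ?_
  · set P₁ := span {(5 : R), θ + 1}
    set P₂ := span {(5 : R), θ - 1}
    have h₁ : (5 : R) ∈ P₁ := subset_span (by simp)
    have h₁' : θ + 1 ∈ P₁ := subset_span (by simp)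
    have h₂ : (5 : R) ∈ P₂ := subset_span (by simp)
    have h₂' : θ - 1 ∈ P₂ := subset_span (by simp)
    -- `θ⁻¹ = θ ^ 2 - 29 * θ + 4` and `(θ + 1) ^ 2 * (θ - 1) = 5 * θ * (6 * θ - 1)`
    have h5 : (5 : R) = 2 * (5 * 5 * 5) - 21 * ((θ + 1) * (θ + 1) * 5) +
        21 * (5 * (θ + 1) * (θ - 1)) +
        7 * (θ ^ 2 - 29 * θ + 4) * ((θ + 1) * (θ + 1) * (θ - 1)) := by
      linear_combination (-7 * θ ^ 2 - 7 * θ + 7) * hθ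
    rw [span_singleton_le_iff_mem, sq, h5]
    refine add_mem (add_mem (sub_mem ?_ ?_) ?_) ?_ <;>
      exact mul_mem_left _ _ (mul_mem_mul (mul_mem_mul ‹_› ‹_›) ‹_›)
  · rw [span_insert, span_insert, ← Submodule.add_eq_sup, ← Submodule.add_eq_sup]
    set I : Ideal R := span {5}
    have : (I + span {θ + 1}) ^ 2 * (I + span {θ - 1}) =
        I * ((I + span {θ + 1}) ^ 2 + (I + 2 * span {θ + 1}) * span {θ - 1}) +
          span {(θ + 1) ^ 2 * (θ - 1)} := by
      rw [← span_singleton_mul_span_singleton, ← span_singleton_pow]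
      ring
    rw [this, Submodule.add_eq_sup]
    refine sup_le mul_le_left ?_
    rw [span_singleton_le_iff_mem, mem_span_singleton]
    exact ⟨6 * θ ^ 2 - θ, by linear_combination hθ⟩

theorem span_five_add_one_sup_span_five_sub_one (θ : R) :
    span {(5 : R), θ + 1} ⊔ span {5, θ - 1} = ⊤ := by
  have h : (5 : R) - 2 * ((θ + 1) - (θ - 1)) ∈ span {(5 : R), θ + 1} ⊔ span {5, θ - 1} :=
    sub_mem (mem_sup_left (subset_span (by simp))) (mul_mem_left _ _
      (sub_mem (mem_sup_left (subset_span (by simp))) (mem_sup_right (subset_span (by simp)))))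
  rw [eq_top_iff_one]
  convert h using 1
  ring

end Ideal

open Ideal in
theorem exists_span_five_eq_sq_mul {K : Type*} [Field K] [NumberField K] (θ : 𝓞 K)
    (hθ : minpoly ℚ (θ : K) = g) (hK : finrank ℚ K = 3) :
    ∃ P₁ P₂ : Ideal (𝓞 K), P₁.IsMaximal ∧ P₂.IsMaximal ∧ P₁ ≠ P₂ ∧
      span {(5 : 𝓞 K)} = P₁ ^ 2 * P₂ := by
  have hθ3 : θ ^ 3 - 29 * θ ^ 2 + 4 * θ - 1 = 0 := by
    have h : aeval (algebraMap (𝓞 K) K θ) gInt = 0 := by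
      rw [aeval_gInt, ← aeval_g, ← hθ]
      exact minpoly.aeval ℚ _
    rwa [aeval_algebraMap_apply, map_eq_zero_iff _ RingOfIntegers.coe_injective, aeval_gInt] at h
  have hfactor := span_five_eq_sq_mul hθ3
  set P₁ := span {(5 : 𝓞 K), θ + 1}
  set P₂ := span {(5 : 𝓞 K), θ - 1}
  have hnorm : absNorm P₁ ^ 2 * absNorm P₂ = 125 := by
    rw [← map_pow, ← map_mul, ← hfactor, ← Nat.cast_ofNat, absNorm_span_natCast,
      RingOfIntegers.rank, hK]
    norm_num
  have hnorm_sub : absNorm (span {θ - 1}) = 25 := by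
    have h := Algebra.norm_sub_algebraMap_eq_eval_minpoly (by rw [hθ, g_natDegree, hK]) (1 : ℚ)
    rw [hθ, hK, map_one] at h
    have h' : (Algebra.norm ℤ (θ - 1) : ℚ) = 25 := by
      rw [Algebra.coe_norm_int]
      simp only [map_sub, map_one, h]
      norm_num [g]
    rw [absNorm_span_singleton, (by exact_mod_cast h' : Algebra.norm ℤ (θ - 1) = 25)]
    rfl
  have hdvd : absNorm P₂ ∣ 25 := by
    rw [← hnorm_sub]
    exact absNorm_dvd_absNorm_of_le ((span_singleton_le_iff_mem _).2 (subset_span (by simp)))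
  obtain ⟨h₁, h₂⟩ := eq_five_of_sq_mul_eq_125 hnorm hdvd
  have hP₁ := isMaximal_of_absNorm_prime (h₁ ▸ Nat.prime_five)
  refine ⟨P₁, P₂, hP₁, isMaximal_of_absNorm_prime (h₂ ▸ Nat.prime_five), fun h ↦ ?_, hfactor⟩
  have htop : P₁ ⊔ P₂ = ⊤ := span_five_add_one_sup_span_five_sub_one θ
  rw [← h, sup_idem] at htop
  exact hP₁.ne_top htop

theorem stmt_18 :
    Irreducible g ∧
    (∃ z : ℂ, Polynomial.aeval z g = 0 ∧ z.im ≠ 0) ∧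
    -- any field `K` with a root `θ` of `g` generating it over `ℚ` is
    -- (since `g` is irreducible) a copy of the root field `ℚ[X]/(g)`
    (∀ (K : Type) [Field K] [Algebra ℚ K] (θ : K),
      Polynomial.aeval θ g = 0 → Algebra.adjoin ℚ {θ} = ⊤ →
      ∃ P₁ P₂ : Ideal (𝓞 K), P₁.IsMaximal ∧ P₂.IsMaximal ∧ P₁ ≠ P₂ ∧
        Ideal.span {(5 : 𝓞 K)} = P₁ ^ 2 * P₂) := by
  refine ⟨g_irreducible, exists_aeval_g_eq_zero_im_ne_zero, fun K _ _ θ hθ hgen ↦ ?_⟩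
  have : CharZero K := charZero_of_injective_algebraMap (algebraMap ℚ K).injective
  -- `NumberField K` refers to the canonical `ℚ`-algebra structure
  obtain rfl : ‹Algebra ℚ K› = DivisionRing.toRatAlgebra := Subsingleton.elim _ _
  have hint : IsIntegral ℚ θ := ⟨g, g_monic, hθ⟩
  have : NumberField K := { to_finiteDimensional := (PowerBasis.ofAdjoinEqTop hint hgen).finite }
  have hminpoly : minpoly ℚ θ = g :=
    (minpoly.eq_of_irreducible_of_monic g_irreducible hθ g_monic).symm
  have hintegral : IsIntegral ℤ θ :=
    ⟨gInt, gInt_monic, by rwa [← aeval_def, aeval_gInt, ← aeval_g]⟩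
  refine exists_span_five_eq_sq_mul ⟨θ, hintegral⟩ hminpoly ?_
  rw [(PowerBasis.ofAdjoinEqTop hint hgen).finrank, PowerBasis.ofAdjoinEqTop_dim, hminpoly,
    g_natDegree]
end

section
/- There exists β ∈ ℤ₅ with β³ - 29β² + 4β - 1 = 0 and β ≡ 1 (mod 25); moreover β is a unit of ℤ₅ and is a fifth power in ℤ₅, i.e., there exists y ∈ ℤ₅ with y⁵ = β. -/
/-!
Hensel's lemma at `1` gives a root `β` of `F = X³ - 29X² + 4X - 1`, as `F(1) = -25` and
`F'(1) = -51` is a unit. Expanding `F` around `1`, `0 = F(1) + (β - 1) w` with `w ≡ F'(1)` a unit,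
so `25 ∣ F(1)` forces `25 ∣ β - 1`; and `β` is a unit because `β (β² - 29β + 4) = 1`.

For odd `p`, every `x = 1 + p²u` is a `p`-th power: `a = 1 + pu` satisfies
`aᵖ - 1 = pu · ∑ aⁱ` with `∑ aⁱ ≡ p (mod p²)`, so `aᵖ ≡ x (mod p³)`, while `‖p aᵖ⁻¹‖² = p⁻²`;
Hensel's lemma applies to `Xᵖ - x` at `a`.
-/

open Polynomial IsLocalRing

theorem IsLocalRing.isUnit_add_of_mem_maximalIdeal {R : Type*} [CommRing R] [IsLocalRing R]
    {u m : R} (hu : IsUnit u) (hm : m ∈ maximalIdeal R) : IsUnit (u + m) := by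
  rw [← notMem_maximalIdeal] at hu ⊢
  exact fun h => hu (by simpa using sub_mem h hm)

theorem Polynomial.dvd_sub_of_isRoot_of_mem_maximalIdeal {R : Type*} [CommRing R] [IsLocalRing R]
    {F : R[X]} {a z d : R} (hz : F.IsRoot z) (ha : IsUnit (F.derivative.eval a))
    (hza : z - a ∈ maximalIdeal R) (hd : d ∣ F.eval a) : d ∣ z - a := by
  obtain ⟨k, hk⟩ := F.binomExpansion a (z - a)
  rw [add_sub_cancel, hz.eq_zero] at hk
  have hw : IsUnit (F.derivative.eval a + k * (z - a)) :=
    isUnit_add_of_mem_maximalIdeal ha (Ideal.mul_mem_left _ _ hza)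
  have hfactor : (z - a) * (F.derivative.eval a + k * (z - a)) = -F.eval a := by
    linear_combination -hk
  rw [← hw.dvd_mul_right, hfactor]
  exact hd.neg_right

namespace PadicInt

variable {p : ℕ} [Fact p.Prime]

theorem exists_pow_eq_of_sq_dvd_sub_one (hp : Odd p) {x : ℤ_[p]} (hx : (p : ℤ_[p]) ^ 2 ∣ x - 1) :
    ∃ y : ℤ_[p], y ^ p = x := by
  obtain ⟨u, hu⟩ := hx
  set a : ℤ_[p] := 1 + p * u
  have ha : ‖a‖ = 1 := by
    refine isUnit_iff.1 (isUnit_add_of_mem_maximalIdeal isUnit_one ?_)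
    rw [maximalIdeal_eq_span_p]
    exact Ideal.mul_mem_right _ _ (Ideal.subset_span rfl)
  have hcube : (p : ℤ_[p]) ^ 3 ∣ a ^ p - x := by
    obtain ⟨c, hc⟩ := odd_sq_dvd_geom_sum₂_sub (1 : ℤ_[p]) u hp
    simp only [one_pow, mul_one] at hc
    refine ⟨u * c, ?_⟩
    linear_combination (-1 : ℤ_[p]) * geom_sum_mul a p - hu + (p * u) * hc
  have hnorm : ‖(X ^ p - C x).aeval a‖ < ‖(X ^ p - C x).derivative.aeval a‖ ^ 2 := by
    obtain ⟨c, hc⟩ := hcube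
    have hp1 : (1 : ℝ) < p := mod_cast (Fact.out : p.Prime).one_lt
    simp only [aeval_def, eval₂_sub, eval₂_X_pow, eval₂_C, derivative_sub, derivative_X_pow,
      derivative_C, sub_zero, eval₂_mul, Algebra.algebraMap_self, RingHom.id_apply]
    rw [hc, norm_mul, norm_mul, norm_pow, norm_pow, ha, one_pow, mul_one, norm_p]
    calc (p : ℝ)⁻¹ ^ 3 * ‖c‖
        ≤ (p : ℝ)⁻¹ ^ 3 := mul_le_of_le_one_right (by positivity) (norm_le_one c)
      _ < (p : ℝ)⁻¹ ^ 2 :=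
        pow_lt_pow_right_of_lt_one₀ (by positivity) (inv_lt_one_of_one_lt₀ hp1) (by norm_num)
  obtain ⟨y, hy, -⟩ := hensels_lemma hnorm
  exact ⟨y, by simpa [sub_eq_zero] using hy⟩

end PadicInt

theorem stmt_19 :
    ∃ β : ℤ_[5], β ^ 3 - 29 * β ^ 2 + 4 * β - 1 = 0 ∧ (25 : ℤ_[5]) ∣ (β - 1) ∧
      IsUnit β ∧ ∃ y : ℤ_[5], y ^ 5 = β := by
  set F : ℤ_[5][X] := X ^ 3 - 29 * X ^ 2 + 4 * X - 1
  have hF : ∀ z, F.eval z = z ^ 3 - 29 * z ^ 2 + 4 * z - 1 := fun z => by simp [F]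
  have hF' : ‖F.derivative.eval 1‖ = 1 := by
    have h51 : ‖((51 : ℕ) : ℤ_[5])‖ = 1 := PadicInt.norm_natCast_eq_one_iff.2 (by norm_num)
    have : F.derivative.eval 1 = -51 := by simp [F]; norm_num
    rw [this, norm_neg]; exact_mod_cast h51
  have hnorm : ‖F.aeval (1 : ℤ_[5])‖ < ‖F.derivative.aeval (1 : ℤ_[5])‖ ^ 2 := by
    have h25 : ‖((25 : ℕ) : ℤ_[5])‖ < 1 := PadicInt.norm_natCast_lt_one_iff.2 (by norm_num)
    rw [coe_aeval_eq_eval, hF', hF, one_pow]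
    norm_num
    exact_mod_cast h25
  obtain ⟨β, hβ, hβ1, -⟩ := hensels_lemma hnorm
  rw [coe_aeval_eq_eval] at hβ hβ1
  have hroot : β ^ 3 - 29 * β ^ 2 + 4 * β - 1 = 0 := hF β ▸ hβ
  have h25 : (25 : ℤ_[5]) ∣ β - 1 :=
    dvd_sub_of_isRoot_of_mem_maximalIdeal hβ (PadicInt.isUnit_iff.2 hF')
      ((mem_maximalIdeal _).2 (PadicInt.mem_nonunits.2 (hF' ▸ hβ1))) ⟨-1, by rw [hF]; norm_num⟩
  refine ⟨β, hroot, h25, IsUnit.of_mul_eq_one (β ^ 2 - 29 * β + 4) (by linear_combination hroot),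
    PadicInt.exists_pow_eq_of_sq_dvd_sub_one (by decide) (by norm_num; exact h25)⟩
end
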